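/- For any natural number n ≥ 3, ∑_{p | n} (log p)/√p ≪ √(log n · log log n), i.e., there is an absolute constant C with ∑_{p | n} (log p)/√p ≤ C·√(log n · log log n). -/

import Mathlib

/-!
Split the prime divisors of `n` at `X = log n · log log n`. Each prime `p > X` contributes at most
`log p / √X`, and `∑_{p ∣ n} log p ≤ log n ≤ X`, so these contribute at most `√X`. The primes
`p ≤ X` contribute at most `∑_{p ≤ X} log p / √p = O(√X)`, which follows from Chebyshev's bound
`θ(x) ≤ x log 4` by a dyadic induction: the primes in `(x/2, x]` contribute `O(√x)`, and
`√(x/2) ≤ (3/4)√x`. For the finitely many `n` with `log log n < 1` the sum is at most `log n`.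
-/

open Finset Real Chebyshev

lemma sum_primesLE_log_le (n : ℕ) : ∑ p ∈ Nat.primesLE n, log p ≤ log 4 * n :=
  theta_eq_sum_primesLE_log n ▸ theta_le_log4_mul_x n.cast_nonneg

lemma sum_primeFactors_log_le (n : ℕ) : ∑ p ∈ n.primeFactors, log p ≤ log n := by
  rcases n.eq_zero_or_pos with rfl | hn
  · simp
  rw [← log_prod fun p hp => mod_cast (Nat.prime_of_mem_primeFactors hp).ne_zero, ← Nat.cast_prod]
  exact log_le_log (mod_cast prod_pos fun p hp => (Nat.prime_of_mem_primeFactors hp).pos)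
    (mod_cast Nat.le_of_dvd hn (Nat.prod_primeFactors_dvd n))

lemma filter_le_primesLE {m n : ℕ} (h : m ≤ n) : {p ∈ Nat.primesLE n | p ≤ m} = Nat.primesLE m := by
  ext p
  simp only [mem_filter, Nat.mem_primesLE]
  exact ⟨fun ⟨⟨_, hp⟩, hpm⟩ => ⟨hpm, hp⟩, fun ⟨hpm, hp⟩ => ⟨⟨hpm.trans h, hp⟩, hpm⟩⟩

lemma sum_filter_not_le_log_div_sqrt_le (s : Finset ℕ) (m : ℕ) :
    ∑ p ∈ s with ¬p ≤ m, log p / √p ≤ (∑ p ∈ s, log p) / √(m + 1) := by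
  calc ∑ p ∈ s with ¬p ≤ m, log p / √p
      ≤ ∑ p ∈ s with ¬p ≤ m, log p / √(m + 1) := by
        refine sum_le_sum fun p hp => ?_
        have hmp : m + 1 ≤ p := Nat.lt_of_not_le (mem_filter.1 hp).2
        gcongr
        exact_mod_cast hmp
    _ = (∑ p ∈ s with ¬p ≤ m, log p) / √(m + 1) := (sum_div ..).symm
    _ ≤ (∑ p ∈ s, log p) / √(m + 1) := by
        gcongr
        exact filter_subset _ _

lemma sum_primesLE_log_div_sqrt_le (n : ℕ) : ∑ p ∈ Nat.primesLE n, log p / √p ≤ 12 * √n := by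
  induction n using Nat.strong_induction_on with
  | _ n ih =>
  rcases n.eq_zero_or_pos with rfl | hn
  · simp
  set m := n / 2
  have head : ∑ p ∈ Nat.primesLE n with p ≤ m, log p / √p ≤ 12 * √m := by
    rw [filter_le_primesLE (Nat.div_le_self n 2)]
    exact ih m (Nat.div_lt_self hn one_lt_two)
  have tail : ∑ p ∈ Nat.primesLE n with ¬p ≤ m, log p / √p ≤ log 4 * (n / √(m + 1)) := by
    refine (sum_filter_not_le_log_div_sqrt_le _ m).trans ?_
    rw [← mul_div_assoc]
    gcongr
    exact sum_primesLE_log_le n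
  have hm : √m ≤ 3 / 4 * √n := by
    rw [sqrt_le_left (by positivity), mul_pow, sq_sqrt n.cast_nonneg]
    have : (2 * m : ℝ) ≤ n := mod_cast Nat.mul_div_le n 2
    linarith
  have hn_div : n / √(m + 1) ≤ 2 * √n := by
    have hn_le : √n ≤ 2 * √(m + 1) := by
      rw [sqrt_le_left (by positivity), mul_pow, sq_sqrt (by positivity)]
      exact_mod_cast (by omega : n ≤ 2 ^ 2 * (m + 1))
    rw [div_le_iff₀ (by positivity)]
    calc (n : ℝ) = √n * √n := (mul_self_sqrt n.cast_nonneg).symm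
      _ ≤ √n * (2 * √(m + 1)) := by gcongr
      _ = 2 * √n * √(m + 1) := by ring
  have hlog4 : log 4 ≤ 3 / 2 := by
    rw [show (4 : ℝ) = 2 ^ 2 by norm_num, log_pow]
    linarith [log_two_lt_d9]
  calc ∑ p ∈ Nat.primesLE n, log p / √p
      = ∑ p ∈ Nat.primesLE n with p ≤ m, log p / √p
        + ∑ p ∈ Nat.primesLE n with ¬p ≤ m, log p / √p := (sum_filter_add_sum_filter_not _ _ _).symm
    _ ≤ 12 * √m + log 4 * (n / √(m + 1)) := add_le_add head tail
    _ ≤ 12 * (3 / 4 * √n) + 3 / 2 * (2 * √n) := by gcongr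
    _ = 12 * √n := by ring

lemma sum_primeFactors_log_div_sqrt_le (n T : ℕ) :
    ∑ p ∈ n.primeFactors, log p / √p ≤ 12 * √T + log n / √(T + 1) := by
  rw [← sum_filter_add_sum_filter_not _ (· ≤ T)]
  gcongr ?_ + ?_
  · have hsub : {p ∈ n.primeFactors | p ≤ T} ⊆ Nat.primesLE T := fun p hp => by
      rw [mem_filter] at hp
      exact Nat.mem_primesLE.2 ⟨hp.2, Nat.prime_of_mem_primeFactors hp.1⟩
    exact (sum_le_sum_of_subset_of_nonneg hsub fun p _ _ => by positivity).trans
      (sum_primesLE_log_div_sqrt_le T)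
  · refine (sum_filter_not_le_log_div_sqrt_le _ T).trans ?_
    gcongr
    exact sum_primeFactors_log_le n

lemma sum_primeFactors_log_div_sqrt_le_of_one_le_log_log {n : ℕ} (h : 1 ≤ log (log n)) :
    ∑ p ∈ n.primeFactors, log p / √p ≤ 13 * √(log n * log (log n)) := by
  set L := log n
  set X := L * log L
  have hL : 1 < L := (log_pos_iff (log_natCast_nonneg n)).1 (by linarith)
  have hX : L ≤ X := by nlinarith
  have hXpos : 0 < √X := sqrt_pos.2 (by linarith)
  have hLX : L / √X ≤ √X := by
    rw [div_le_iff₀ hXpos, mul_self_sqrt (by linarith)]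
    exact hX
  calc ∑ p ∈ n.primeFactors, log p / √p ≤ 12 * √⌊X⌋₊ + L / √(⌊X⌋₊ + 1) :=
        sum_primeFactors_log_div_sqrt_le n ⌊X⌋₊
    _ ≤ 12 * √X + L / √X := by
        gcongr
        · exact Nat.floor_le (by linarith)
        · exact (Nat.lt_floor_add_one X).le
    _ ≤ 13 * √X := by linarith

lemma sum_primeFactors_log_div_sqrt_le_of_log_log_lt_one {n : ℕ} (hn : 3 ≤ n)
    (h : log (log n) < 1) :
    ∑ p ∈ n.primeFactors, log p / √p ≤ 13 * √(log n * log (log n)) := by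
  have hsum : ∑ p ∈ n.primeFactors, log p / √p ≤ log n := by
    simpa using sum_primeFactors_log_div_sqrt_le n 0
  set L := log n
  have hL3 : log 3 ≤ L := log_le_log (by norm_num) (mod_cast hn)
  have hL1 : 1.0986 ≤ L := by linarith [log_three_gt_d9]
  have hLe : L < 3 := by
    have := (log_lt_iff_lt_exp (by linarith)).1 h
    linarith [exp_one_lt_d9]
  have hlogL : L - 1 ≤ L * log L := by
    have hL0 : 0 < L := by linarith
    calc L - 1 = L * (1 - L⁻¹) := by field_simp
      _ ≤ L * log L := by gcongr; exact one_sub_inv_le_log_of_pos hL0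
  have hsq : (L / 13) ^ 2 ≤ L - 1 := by nlinarith
  refine hsum.trans ?_
  rw [← div_le_iff₀' (by norm_num), le_sqrt (by linarith) (by linarith)]
  linarith

theorem sum_log_div_sqrt_p_over_prime_divisors :
    ∃ C : ℝ, 0 < C ∧ ∀ n : ℕ, 3 ≤ n →
      ∑ p ∈ n.primeFactors, Real.log p / Real.sqrt p ≤
        C * Real.sqrt (Real.log n * Real.log (Real.log n)) := by
  refine ⟨13, by norm_num, fun n hn => ?_⟩
  rcases le_or_gt 1 (log (log n)) with h | h
  · exact sum_primeFactors_log_div_sqrt_le_of_one_le_log_log h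
  · exact sum_primeFactors_log_div_sqrt_le_of_log_log_lt_one hn h
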